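/- arXiv:2008.08344 — 2 statements merged into one kernel-verified Lean document; each statement's English description precedes it below -/
import Mathlib

section
/- Let V_0 = {(x,z) ∈ F_q^{2d} × F_q^{2d} : ||x|| − ||z|| = 0} ⊆ F_q^{4d}. Then for M ∈ F_q^{4d}, the Fourier transform satisfies: V̂_0(M) = q^{-1}δ_0(M) + q^{-2d-1}(q−1) if ||M||_* = 0, and V̂_0(M) = −q^{-2d-1} if ||M||_* ≠ 0. -/
/-!
Detecting `‖X‖_* = 0` by orthogonality of characters,
`q · ∑_{X ∈ V₀} χ(-M·X) = ∑_{t ∈ F} ∑_X χ(t ‖X‖_* - M·X)`,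
and the term `t = 0` is `q^{4d} δ₀(M)`. For `t ≠ 0` the inner sum factors over the coordinate
pairs `(x_i, z_i)`; the substitution `(x, z) = (u + v, u - v)`, invertible because `q` is odd,
turns `x² - z²` into `4uv`, and on this hyperbolic plane the sum over `v` pins down `u`, so each
factor is `q χ(-(a² - b²)/(4t))`. Hence the `t`-th term is `q^{2d} χ(-‖M‖_*/(4t))`, and
summing over `t ≠ 0` gives `q - 1` or `-1` according as `‖M‖_* = 0` or not. No Gauss sums are
needed.
-/

open Finset

/-- `||x|| = ∑ x_i²`. -/
def nrm {F : Type} [Field F] {n : ℕ} (x : Fin n → F) : F := ∑ i, x i ^ 2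

/-- `||X||_* = ||x|| - ||z||` for `X = (x, z) ∈ F_q^{2d} × F_q^{2d} = F_q^{4d}`. -/
def nrmStar {F : Type} [Field F] {n : ℕ} (X : (Fin n → F) × (Fin n → F)) : F :=
  nrm X.1 - nrm X.2

/-- Dot product on `F_q^{2d} × F_q^{2d} = F_q^{4d}`. -/
def dotP {F : Type} [Field F] {n : ℕ} (M X : (Fin n → F) × (Fin n → F)) : F :=
  (∑ i, M.1 i * X.1 i) + ∑ i, M.2 i * X.2 i

lemma AddChar.map_sum_eq_prod {A M ι : Type*} [AddCommMonoid A] [CommMonoid M] (ψ : AddChar A M)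
    (s : Finset ι) (f : ι → A) : ψ (∑ i ∈ s, f i) = ∏ i ∈ s, ψ (f i) :=
  map_prod ψ.toMonoidHom (fun i => Multiplicative.ofAdd (f i)) s

lemma AddChar.sum_pi_prod_eq_prod_sum {A M ι α : Type*} [AddCommMonoid A] [CommSemiring M]
    [Fintype ι] [DecidableEq ι] [Fintype α] (ψ : AddChar A M) (f : ι → α → α → A) :
    ∑ X : (ι → α) × (ι → α), ψ (∑ i, f i (X.1 i) (X.2 i))
      = ∏ i, ∑ p : α × α, ψ (f i p.1 p.2) := by
  rw [Fintype.prod_sum, ← (Equiv.arrowProdEquivProdArrow ι (fun _ => α) (fun _ => α)).sum_comp]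
  simp [AddChar.map_sum_eq_prod]

lemma sum_addChar_mul_nrmStar_sub_dotP {F : Type} {R : Type*} [Field F] [Fintype F] [CommRing R]
    (ψ : AddChar F R) {n : ℕ} (t : F) (M : (Fin n → F) × (Fin n → F)) :
    ∑ X, ψ (t * nrmStar X - dotP M X)
      = ∏ i, ∑ p : F × F, ψ (t * (p.1 ^ 2 - p.2 ^ 2) - (M.1 i * p.1 + M.2 i * p.2)) := by
  rw [← AddChar.sum_pi_prod_eq_prod_sum ψ
    fun i x z => t * (x ^ 2 - z ^ 2) - (M.1 i * x + M.2 i * z)]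
  congr! 2 with X
  simp only [nrmStar, nrm, dotP, mul_sum, ← sum_sub_distrib, ← sum_add_distrib]

lemma four_ne_zero_of_two_ne_zero {F : Type*} [Field F] (h2 : (2 : F) ≠ 0) : (4 : F) ≠ 0 := by
  rw [show (4 : F) = 2 * 2 by norm_num]
  exact mul_ne_zero h2 h2

lemma FiniteField.two_ne_zero_of_odd_card {F : Type*} [Field F] [Fintype F]
    (hodd : Odd (Fintype.card F)) : (2 : F) ≠ 0 :=
  Ring.two_ne_zero fun h => by
    have := FiniteField.even_card_iff_char_two.mp h
    rw [Nat.odd_iff] at hodd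
    omega

variable {F : Type} {R : Type*} [Field F] [Fintype F] [CommRing R] [IsDomain R] {ψ : AddChar F R}

lemma sum_addChar_mul_right [DecidableEq F] (hψ : ψ ≠ 1) (c : F) :
    ∑ t, ψ (t * c) = if c = 0 then (Fintype.card F : R) else 0 := by
  rw [AddChar.sum_mulShift c (AddChar.IsPrimitive.of_ne_one hψ), Nat.cast_ite, Nat.cast_zero]

lemma sum_addChar_mul_inv_erase_zero [DecidableEq F] (hψ : ψ ≠ 1) (c : F) :
    ∑ t ∈ univ.erase 0, ψ (c * t⁻¹) = (if c = 0 then (Fintype.card F : R) else 0) - 1 := by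
  rw [sum_erase_eq_sub (mem_univ 0), inv_zero, mul_zero, AddChar.map_zero_eq_one,
    ← sum_addChar_mul_right hψ c]
  congr 1
  -- `t ↦ t⁻¹` permutes all of `F`, since `0⁻¹ = 0`
  exact Fintype.sum_equiv (Equiv.inv F) _ _ fun t => by rw [mul_comm]; rfl

lemma sum_addChar_mul_mul_sub (hψ : ψ ≠ 1) {s : F} (hs : s ≠ 0) (a b : F) :
    ∑ p : F × F, ψ (s * p.1 * p.2 - (a * p.1 + b * p.2))
      = Fintype.card F * ψ (-(a * b) / s) := by
  classical
  have hinner : ∀ u : F, ∑ v : F, ψ (s * u * v - (a * u + b * v))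
      = if u = b / s then Fintype.card F * ψ (-(a * b) / s) else 0 := by
    intro u
    have harg : ∀ v, s * u * v - (a * u + b * v) = v * (s * u - b) + -(a * u) := fun v => by ring
    simp_rw [harg, AddChar.map_add_eq_mul, ← sum_mul, sum_addChar_mul_right hψ, sub_eq_zero,
      eq_div_iff hs, mul_comm u s]
    split_ifs with h
    · rw [← h]; field_simp
    · rw [zero_mul]
  rw [Fintype.sum_prod_type]
  simp_rw [hinner, sum_ite_eq', mem_univ, if_true]

lemma sum_addChar_mul_sq_sub_sq (hψ : ψ ≠ 1) (h2 : (2 : F) ≠ 0) {t : F} (ht : t ≠ 0)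
    (a b : F) :
    ∑ p : F × F, ψ (t * (p.1 ^ 2 - p.2 ^ 2) - (a * p.1 + b * p.2))
      = Fintype.card F * ψ (-(a ^ 2 - b ^ 2) / 4 * t⁻¹) := by
  have hbij : Function.Bijective fun p : F × F => (p.1 + p.2, p.1 - p.2) := by
    refine Finite.injective_iff_bijective.mp fun p p' h => ?_
    simp only [Prod.mk.injEq] at h
    exact Prod.ext (mul_left_cancel₀ h2 (by linear_combination h.1 + h.2))
      (mul_left_cancel₀ h2 (by linear_combination h.1 - h.2))
  have harg : ∀ p : F × F,
      t * ((p.1 + p.2) ^ 2 - (p.1 - p.2) ^ 2) - (a * (p.1 + p.2) + b * (p.1 - p.2))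
        = 4 * t * p.1 * p.2 - ((a + b) * p.1 + (a - b) * p.2) := fun p => by ring
  rw [← hbij.sum_comp]
  simp_rw [harg, sum_addChar_mul_mul_sub hψ (mul_ne_zero (four_ne_zero_of_two_ne_zero h2) ht)]
  congr 2
  field_simp
  ring

lemma sum_addChar_neg_dotP [DecidableEq F] (hψ : ψ ≠ 1) {n : ℕ}
    (M : (Fin n → F) × (Fin n → F)) :
    ∑ X, ψ (-dotP M X) = if M = 0 then (Fintype.card F : R) ^ (2 * n) else 0 := by
  have hfactor : ∀ a b : F, ∑ p : F × F, ψ (-(a * p.1 + b * p.2))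
      = (if a = 0 then (Fintype.card F : R) else 0)
          * (if b = 0 then (Fintype.card F : R) else 0) := by
    intro a b
    have harg : ∀ x z : F, -(a * x + b * z) = x * -a + z * -b := fun x z => by ring
    simp_rw [Fintype.sum_prod_type, harg, AddChar.map_add_eq_mul, ← sum_mul_sum,
      sum_addChar_mul_right hψ, neg_eq_zero]
  have hprod := sum_addChar_mul_nrmStar_sub_dotP ψ 0 M
  simp only [zero_mul, zero_sub] at hprod
  rw [hprod]
  simp only [hfactor, prod_mul_distrib, prod_ite_zero, prod_const, card_univ, Fintype.card_fin,
    mem_univ, forall_const]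
  rw [ite_zero_mul_ite_zero, ← pow_add, ← two_mul]
  exact if_congr (by simp [Prod.ext_iff, funext_iff]) rfl rfl

lemma sum_addChar_mul_nrmStar_sub_dotP_of_ne_zero (hψ : ψ ≠ 1) (h2 : (2 : F) ≠ 0) {t : F}
    (ht : t ≠ 0) {n : ℕ} (M : (Fin n → F) × (Fin n → F)) :
    ∑ X, ψ (t * nrmStar X - dotP M X) = Fintype.card F ^ n * ψ (-nrmStar M / 4 * t⁻¹) := by
  simp_rw [sum_addChar_mul_nrmStar_sub_dotP, sum_addChar_mul_sq_sub_sq hψ h2 ht, prod_mul_distrib,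
    prod_const, card_univ, Fintype.card_fin, ← AddChar.map_sum_eq_prod, ← sum_mul, ← sum_div,
    nrmStar, nrm, sum_neg_distrib, sum_sub_distrib]

lemma card_mul_sum_nrmStar_eq_zero [DecidableEq F] (hψ : ψ ≠ 1) (h2 : (2 : F) ≠ 0) {n : ℕ}
    (M : (Fin n → F) × (Fin n → F)) :
    Fintype.card F * ∑ X ∈ univ.filter (fun X : (Fin n → F) × (Fin n → F) => nrmStar X = 0),
        ψ (-dotP M X)
      = (if M = 0 then (Fintype.card F : R) ^ (2 * n) else 0)
          + Fintype.card F ^ n * ((if nrmStar M = 0 then (Fintype.card F : R) else 0) - 1) := by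
  have hdetect : ∀ X, ∑ t, ψ (t * nrmStar X - dotP M X)
      = if nrmStar X = 0 then Fintype.card F * ψ (-dotP M X) else 0 := fun X => by
    simp_rw [sub_eq_add_neg, AddChar.map_add_eq_mul, ← sum_mul, sum_addChar_mul_right hψ,
      ite_mul, zero_mul]
  have hc : -nrmStar M / 4 = 0 ↔ nrmStar M = 0 := by
    rw [div_eq_zero_iff, neg_eq_zero, or_iff_left (four_ne_zero_of_two_ne_zero h2)]
  calc _ = ∑ X, ∑ t, ψ (t * nrmStar X - dotP M X) := by
        simp_rw [hdetect, mul_sum, sum_filter]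
    _ = ∑ t, ∑ X, ψ (t * nrmStar X - dotP M X) := sum_comm
    _ = ∑ X, ψ (0 * nrmStar X - dotP M X)
          + ∑ t ∈ univ.erase 0, ∑ X, ψ (t * nrmStar X - dotP M X) :=
        (add_sum_erase _ _ (mem_univ 0)).symm
    _ = _ := by
      simp_rw [zero_mul, zero_sub, sum_addChar_neg_dotP hψ]
      rw [sum_congr rfl fun t ht =>
          sum_addChar_mul_nrmStar_sub_dotP_of_ne_zero hψ h2 (ne_of_mem_erase ht) M,
        ← mul_sum, sum_addChar_mul_inv_erase_zero hψ, if_congr hc rfl rfl]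

theorem stmt_10_general {F : Type} [Field F] [Fintype F] [DecidableEq F]
    (hodd : Odd (Fintype.card F)) (χ : AddChar F ℂ) (hχ : χ ≠ 1)
    (d : ℕ) (M : (Fin (2 * d) → F) × (Fin (2 * d) → F)) :
    (nrmStar M = 0 →
      ((Fintype.card F : ℂ) ^ (4 * d))⁻¹ *
          ∑ X ∈ univ.filter (fun X : (Fin (2 * d) → F) × (Fin (2 * d) → F) =>
              nrmStar X = 0), χ (-(dotP M X))
        = (if M = 0 then (Fintype.card F : ℂ)⁻¹ else 0)
            + (Fintype.card F : ℂ) ^ (-(2 * (d : ℤ)) - 1) * ((Fintype.card F : ℂ) - 1)) ∧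
    (nrmStar M ≠ 0 →
      ((Fintype.card F : ℂ) ^ (4 * d))⁻¹ *
          ∑ X ∈ univ.filter (fun X : (Fin (2 * d) → F) × (Fin (2 * d) → F) =>
              nrmStar X = 0), χ (-(dotP M X))
        = -(Fintype.card F : ℂ) ^ (-(2 * (d : ℤ)) - 1)) := by
  have key := card_mul_sum_nrmStar_eq_zero hχ (FiniteField.two_ne_zero_of_odd_card hodd) M
  set q : ℂ := (Fintype.card F : ℂ)
  have hq : q ≠ 0 := Nat.cast_ne_zero.mpr Fintype.card_ne_zero
  have hzpow : q ^ (-(2 * (d : ℤ)) - 1) = (q ^ (2 * d + 1))⁻¹ := by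
    rw [← zpow_natCast, ← zpow_neg]
    push_cast
    ring_nf
  rw [show 2 * (2 * d) = 4 * d by ring] at key
  rw [hzpow]
  refine ⟨fun hM => ?_, fun hM => ?_⟩ <;>
    rw [inv_mul_eq_iff_eq_mul₀ (pow_ne_zero _ hq), ← mul_right_inj' hq, key]
  · rw [if_pos hM]
    split_ifs <;> field_simp <;> ring
  · have hM0 : M ≠ 0 := by rintro rfl; simp [nrmStar, nrm] at hM
    rw [if_neg hM, if_neg hM0]
    field_simp
    ring

/-- The Fourier transform of the variety `V₀ = {X ∈ F_q^{4d} : ||X||_* = 0}`: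
`V̂₀(M) = q^{-1} δ₀(M) + q^{-2d-1}(q-1)` if `||M||_* = 0`, and
`V̂₀(M) = -q^{-2d-1}` if `||M||_* ≠ 0`. -/
theorem stmt_10 {F : Type} [Field F] [Fintype F] [DecidableEq F]
    (hodd : Odd (Fintype.card F)) (χ : AddChar F ℂ) (hχ : χ ≠ 1)
    (d : ℕ) (hd : 1 ≤ d) (M : (Fin (2 * d) → F) × (Fin (2 * d) → F)) :
    (nrmStar M = 0 →
      ((Fintype.card F : ℂ) ^ (4 * d))⁻¹ *
          ∑ X ∈ univ.filter (fun X : (Fin (2 * d) → F) × (Fin (2 * d) → F) =>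
              nrmStar X = 0), χ (-(dotP M X))
        = (if M = 0 then (Fintype.card F : ℂ)⁻¹ else 0)
            + (Fintype.card F : ℂ) ^ (-(2 * (d : ℤ)) - 1) * ((Fintype.card F : ℂ) - 1)) ∧
    (nrmStar M ≠ 0 →
      ((Fintype.card F : ℂ) ^ (4 * d))⁻¹ *
          ∑ X ∈ univ.filter (fun X : (Fin (2 * d) → F) × (Fin (2 * d) → F) =>
              nrmStar X = 0), χ (-(dotP M X))
        = -(Fintype.card F : ℂ) ^ (-(2 * (d : ℤ)) - 1)) :=
  stmt_10_general hodd χ hχ d M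
end

section
/- Suppose d ≡ 2 (mod 4) and q ≡ 3 (mod 4). For any F ⊆ F_q^d, the zero-radius sphere restriction satisfies M_0(F) := Σ_{m ∈ S_0^{d-1}} |F̂(m)|² ≤ q^{-d-1}|F| + q^{(-3d-2)/2}|F|². -/
/-!
Detect the zero sphere with additive characters: `1[Q m = 0] = q⁻¹ ∑ₜ χ(t Q m)` with
`Q m = ∑ mᵢ²`. For `t ≠ 0`, completing the square in each coordinate turns `∑ₘ χ(t Q m + m·v)`
into `χ(-Q v / 4t) gₜ^d`, where `gₜ = ∑ᵤ χ(t u²)` is a quadratic Gauss sum with `gₜ² = η(-1) q`.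
As `q ≡ 3 (mod 4)` gives `η(-1) = -1` and `d / 2` is odd, `gₜ^d = -q^{d/2}` for every `t ≠ 0`, so
`∑_{m ∈ S₀} χ(m·v) = q^{d-1} 1[v = 0] - q^{d/2-1} (q 1[Q v = 0] - 1)`.
Expanding `|Â(m)|²` as a double sum over `A` yields the exact identity
`M₀(A) = q^{-d-1}|A| + q^{-3d/2-1}|A|² - q^{-3d/2} N`, where `N ≥ 0` counts the pairs of points
of `A` at zero distance.
-/

open Finset

/-- The Fourier transform of the indicator of `A ⊆ F_q^d`. -/
noncomputable def ftSet {F : Type} [Field F] [Fintype F] {d : ℕ} (χ : AddChar F ℂ)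
    (A : Finset (Fin d → F)) (m : Fin d → F) : ℂ :=
  ((Fintype.card F : ℂ) ^ d)⁻¹ * ∑ x ∈ A, χ (-(∑ i, m i * x i))

namespace AddChar

lemma map_sum_eq_prod_s13 {A M ι : Type*} [AddCommMonoid A] [CommMonoid M] (ψ : AddChar A M)
    (s : Finset ι) (f : ι → A) : ψ (∑ i ∈ s, f i) = ∏ i ∈ s, ψ (f i) := by
  induction s using Finset.cons_induction with
  | empty => simp
  | cons a s ha ih => rw [sum_cons, prod_cons, map_add_eq_mul, ih]

end AddChar

lemma ringChar_ne_two_of_card_mod_four_eq_three {F : Type} [Field F] [Fintype F]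
    (hq : Fintype.card F % 4 = 3) : ringChar F ≠ 2 := fun h => by
  have := FiniteField.even_card_of_char_two h
  omega

lemma four_ne_zero_of_ringChar_ne_two {K : Type*} [Field K] (hK : ringChar K ≠ 2) :
    (4 : K) ≠ 0 := by
  rw [show (4 : K) = 2 * 2 by norm_num]
  exact mul_ne_zero (Ring.two_ne_zero hK) (Ring.two_ne_zero hK)

section Orthogonality

variable {F : Type} [Field F] [Fintype F] [DecidableEq F]
  {R : Type*} [CommRing R] [IsDomain R] {ψ : AddChar F R}

lemma sum_addChar_mul_eq_ite (hψ : ψ ≠ 1) (b : F) :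
    ∑ t, ψ (t * b) = if b = 0 then (Fintype.card F : R) else 0 := by
  rw [AddChar.sum_mulShift b (.of_ne_one hψ), Nat.cast_ite, Nat.cast_zero]

lemma sum_addChar_dotProduct_eq_ite {ι : Type*} [Fintype ι] [DecidableEq ι]
    (hψ : ψ ≠ 1) (v : ι → F) :
    ∑ m : ι → F, ψ (∑ i, m i * v i)
      = if v = 0 then (Fintype.card F : R) ^ Fintype.card ι else 0 := by
  calc ∑ m : ι → F, ψ (∑ i, m i * v i)
      = ∏ i, ∑ u, ψ (u * v i) := by
        simp only [AddChar.map_sum_eq_prod_s13, Fintype.prod_sum]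
    _ = _ := by
        simp [sum_addChar_mul_eq_ite hψ, prod_ite_zero, funext_iff]

lemma sum_erase_zero_addChar_mul_inv (hψ : ψ ≠ 1) (a : F) :
    ∑ t ∈ univ.erase 0, ψ (a * t⁻¹) = (if a = 0 then (Fintype.card F : R) else 0) - 1 := by
  -- `t ↦ t⁻¹` permutes `F`, fixing `0` since `0⁻¹ = 0`.
  have hinv : ∑ t, ψ (a * t⁻¹) = ∑ t, ψ (t * a) :=
    Fintype.sum_equiv (Equiv.inv F) _ _ fun t => by simp [mul_comm]
  rw [← sum_addChar_mul_eq_ite hψ, ← hinv, ← add_sum_erase _ _ (mem_univ 0)]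
  simp

end Orthogonality

section GaussSum

variable {F : Type} [Field F] [Fintype F] [DecidableEq F]
  {R : Type*} [CommRing R] [IsDomain R] {ψ : AddChar F R}

lemma sum_addChar_sq_eq_gaussSum (hF : ringChar F ≠ 2) (hψ : ψ ≠ 1) :
    ∑ u, ψ (u ^ 2) = gaussSum ((quadraticChar F).ringHomComp (Int.castRingHom R)) ψ := by
  have hsqrts (s : F) : (#{u | u ^ 2 = s} : R) = quadraticChar F s + 1 := by
    have := quadraticChar_card_sqrts hF s
    rw [Set.toFinset_ofPred] at this
    exact_mod_cast congrArg (Int.cast : ℤ → R) this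
  calc ∑ u, ψ (u ^ 2)
      = ∑ s, (#{u | u ^ 2 = s} : R) * ψ s := by
        rw [← sum_fiberwise' univ (· ^ 2) ψ]
        simp only [sum_const, nsmul_eq_mul]
    _ = gaussSum ((quadraticChar F).ringHomComp (Int.castRingHom R)) ψ + ∑ s, ψ s := by
        simp only [hsqrts, add_mul, one_mul, sum_add_distrib, gaussSum,
          MulChar.ringHomComp_apply, eq_intCast]
    _ = _ := by rw [AddChar.sum_eq_zero_of_ne_one hψ, add_zero]

lemma sum_addChar_sq_sq [CharZero R] (hF : ringChar F ≠ 2) (hψ : ψ ≠ 1) :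
    (∑ u, ψ (u ^ 2)) ^ 2 = quadraticChar F (-1) * Fintype.card F := by
  rw [sum_addChar_sq_eq_gaussSum hF hψ, gaussSum_sq
    ((MulChar.ringHomComp_ne_one_iff Int.cast_injective).mpr (quadraticChar_ne_one hF))
    ((quadraticChar_isQuadratic F).comp _) (.of_ne_one hψ)]
  rfl

end GaussSum

section CompletingTheSquare

variable {F : Type} [Field F] [Fintype F] {R : Type*} [CommRing R] (ψ : AddChar F R)
  {t : F}

lemma sum_addChar_mul_sq_add_mul (hF : ringChar F ≠ 2) (ht : t ≠ 0) (b : F) :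
    ∑ u, ψ (t * u ^ 2 + b * u) = ψ (-b ^ 2 / (4 * t)) * ∑ u, ψ (t * u ^ 2) := by
  have h2 : (2 : F) ≠ 0 := Ring.two_ne_zero hF
  have h4 : (4 : F) ≠ 0 := four_ne_zero_of_ringChar_ne_two hF
  have hsquare (u : F) :
      t * (u - b / (2 * t)) ^ 2 + b * (u - b / (2 * t)) = -b ^ 2 / (4 * t) + t * u ^ 2 := by
    field_simp
    ring
  rw [mul_sum, ← Fintype.sum_equiv (Equiv.subRight (b / (2 * t))) _ _ fun u => rfl]
  simp only [Equiv.subRight_apply, hsquare, AddChar.map_add_eq_mul]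

lemma sum_addChar_mul_sumSq_add_dot {ι : Type*} [Fintype ι] [DecidableEq ι]
    (hF : ringChar F ≠ 2) (ht : t ≠ 0) (v : ι → F) :
    ∑ m : ι → F, ψ (t * ∑ i, m i ^ 2 + ∑ i, m i * v i)
      = ψ (-(∑ i, v i ^ 2) / (4 * t)) * (∑ u, ψ (t * u ^ 2)) ^ Fintype.card ι := by
  have hsplit (m : ι → F) :
      t * ∑ i, m i ^ 2 + ∑ i, m i * v i = ∑ i, (t * m i ^ 2 + v i * m i) := by
    simp only [mul_sum, sum_add_distrib, mul_comm (m _)]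
  calc ∑ m : ι → F, ψ (t * ∑ i, m i ^ 2 + ∑ i, m i * v i)
      = ∏ i, ∑ u, ψ (t * u ^ 2 + v i * u) := by
        simp only [hsplit, AddChar.map_sum_eq_prod_s13, Fintype.prod_sum]
    _ = ψ (-(∑ i, v i ^ 2) / (4 * t)) * (∑ u, ψ (t * u ^ 2)) ^ Fintype.card ι := by
        simp only [sum_addChar_mul_sq_add_mul ψ hF ht, prod_mul_distrib, prod_const, card_univ,
          ← AddChar.map_sum_eq_prod_s13, ← sum_div, ← sum_neg_distrib]

end CompletingTheSquare

section ZeroSphere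

variable {F : Type} [Field F] [Fintype F] [DecidableEq F] {ψ : AddChar F ℂ}

lemma sum_filter_eq_zero_eq_inv_card_mul_sum_addChar {α : Type*} [Fintype α]
    (hψ : ψ ≠ 1) (Q : α → F) (f : α → ℂ) :
    ∑ m ∈ univ.filter (fun m => Q m = 0), f m
      = (Fintype.card F : ℂ)⁻¹ * ∑ t, ∑ m, ψ (t * Q m) * f m := by
  have hq : (Fintype.card F : ℂ) ≠ 0 := Nat.cast_ne_zero.mpr Fintype.card_ne_zero
  rw [sum_comm, mul_sum, sum_filter]
  refine sum_congr rfl fun m _ => ?_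
  rw [← sum_mul, sum_addChar_mul_eq_ite hψ]
  split_ifs <;> simp [hq]

lemma sum_zeroSphere_addChar_dot {ι : Type*} [Fintype ι] [DecidableEq ι]
    (hF : ringChar F ≠ 2) (hψ : ψ ≠ 1) (hι : Even (Fintype.card ι)) (v : ι → F) :
    ∑ m ∈ univ.filter (fun m : ι → F => ∑ i, m i ^ 2 = 0), ψ (∑ i, m i * v i)
      = (Fintype.card F : ℂ)⁻¹ * ((if v = 0 then (Fintype.card F : ℂ) ^ Fintype.card ι else 0)
        + (quadraticChar F (-1) * Fintype.card F : ℂ) ^ (Fintype.card ι / 2)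
          * ((if ∑ i, v i ^ 2 = 0 then (Fintype.card F : ℂ) else 0) - 1)) := by
  have hpow {t : F} (ht : t ≠ 0) : (∑ u, ψ (t * u ^ 2)) ^ Fintype.card ι
      = (quadraticChar F (-1) * Fintype.card F : ℂ) ^ (Fintype.card ι / 2) := by
    obtain ⟨k, hk⟩ := hι
    have hsq := sum_addChar_sq_sq hF (AddChar.IsPrimitive.of_ne_one hψ ht)
    simp only [AddChar.mulShift_apply] at hsq
    rw [hk, show (k + k) / 2 = k by omega, ← two_mul, pow_mul, hsq]
  have hterm {t : F} (ht : t ∈ univ.erase 0) :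
      ∑ m : ι → F, ψ (t * ∑ i, m i ^ 2 + ∑ i, m i * v i)
        = (quadraticChar F (-1) * Fintype.card F : ℂ) ^ (Fintype.card ι / 2)
          * ψ (-(∑ i, v i ^ 2) / 4 * t⁻¹) := by
    rw [sum_addChar_mul_sumSq_add_dot ψ hF (ne_of_mem_erase ht), hpow (ne_of_mem_erase ht),
      mul_comm, div_mul_eq_div_div, div_eq_mul_inv _ t]
  rw [sum_filter_eq_zero_eq_inv_card_mul_sum_addChar hψ]
  simp_rw [← AddChar.map_add_eq_mul]
  rw [← add_sum_erase _ _ (mem_univ 0), sum_congr rfl fun t => hterm, ← mul_sum,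
    sum_erase_zero_addChar_mul_inv hψ]
  simp only [zero_mul, zero_add, sum_addChar_dotProduct_eq_ite hψ, div_eq_zero_iff, neg_eq_zero,
    four_ne_zero_of_ringChar_ne_two hF, or_false]

end ZeroSphere

section Energy

variable {F : Type} [Field F] [Fintype F] {d : ℕ}

lemma ofReal_sum_norm_ftSet_sq (ψ : AddChar F ℂ) (A T : Finset (Fin d → F)) :
    ((∑ m ∈ T, ‖ftSet ψ A m‖ ^ 2 : ℝ) : ℂ)
      = ((Fintype.card F : ℂ) ^ d)⁻¹ ^ 2
        * ∑ x ∈ A, ∑ y ∈ A, ∑ m ∈ T, ψ (∑ i, m i * (y i - x i)) := by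
  have hconj (a : F) : (starRingEnd ℂ) (ψ (-a)) = ψ a := by
    rw [AddChar.map_neg_eq_conj, Complex.conj_conj]
  have hpoint (m : Fin d → F) : (‖ftSet ψ A m‖ : ℂ) ^ 2
      = ((Fintype.card F : ℂ) ^ d)⁻¹ ^ 2 * ∑ x ∈ A, ∑ y ∈ A, ψ (∑ i, m i * (y i - x i)) := by
    have hdot (x y : Fin d → F) :
        ψ (-∑ i, m i * x i) * ψ (∑ i, m i * y i) = ψ (∑ i, m i * (y i - x i)) := by
      rw [← AddChar.map_add_eq_mul, neg_add_eq_sub, ← sum_sub_distrib]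
      simp only [mul_sub]
    rw [← Complex.mul_conj', ftSet, map_mul, map_sum]
    simp only [hconj, map_inv₀, map_pow, map_natCast]
    rw [mul_mul_mul_comm, sum_mul_sum, ← sq]
    simp only [hdot]
  rw [Complex.ofReal_sum]
  simp only [Complex.ofReal_pow, hpoint, ← mul_sum]
  rw [sum_comm]
  exact congrArg _ (sum_congr rfl fun x _ => sum_comm)

end Energy

section Identity

variable {F : Type} [Field F] [Fintype F] [DecidableEq F] {d : ℕ} {ψ : AddChar F ℂ}

lemma ofReal_sum_zeroSphere_norm_ftSet_sq (hF : ringChar F ≠ 2) (hψ : ψ ≠ 1) (hd : Even d)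
    (A : Finset (Fin d → F)) :
    ((∑ m ∈ univ.filter (fun m : Fin d → F => ∑ i, m i ^ 2 = 0), ‖ftSet ψ A m‖ ^ 2 : ℝ) : ℂ)
      = ((Fintype.card F : ℂ) ^ d)⁻¹ ^ 2 * (Fintype.card F : ℂ)⁻¹
        * ((Fintype.card F : ℂ) ^ d * #A
          + (quadraticChar F (-1) * Fintype.card F : ℂ) ^ (d / 2)
            * ((Fintype.card F : ℂ) * #{p ∈ A ×ˢ A | ∑ i, (p.2 i - p.1 i) ^ 2 = 0}
              - (#A : ℂ) ^ 2)) := by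
  set q : ℂ := (Fintype.card F : ℂ)
  set c : ℂ := (quadraticChar F (-1) * q) ^ (d / 2)
  have hsphere (x y : Fin d → F) :
      ∑ m ∈ univ.filter (fun m : Fin d → F => ∑ i, m i ^ 2 = 0), ψ (∑ i, m i * (y i - x i))
        = q⁻¹ * (if y = x then q ^ d else 0)
          + q⁻¹ * c * (if ∑ i, (y i - x i) ^ 2 = 0 then q else 0) - q⁻¹ * c := by
    have := sum_zeroSphere_addChar_dot hF hψ (by simpa using hd) (y - x)
    simp only [Fintype.card_fin, Pi.sub_apply, sub_eq_zero] at this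
    rw [this]
    ring
  have hdiag : ∑ x ∈ A, ∑ y ∈ A, (if y = x then q ^ d else 0) = q ^ d * #A := by
    simp [mul_comm]
  have hpairs : ∑ x ∈ A, ∑ y ∈ A, (if ∑ i, (y i - x i) ^ 2 = 0 then q else 0)
      = q * #{p ∈ A ×ˢ A | ∑ i, (p.2 i - p.1 i) ^ 2 = 0} := by
    simp only [card_filter, sum_product, Nat.cast_sum, Nat.cast_ite, Nat.cast_one, Nat.cast_zero,
      mul_sum, mul_ite, mul_one, mul_zero]
  rw [ofReal_sum_norm_ftSet_sq]
  simp only [hsphere, sum_add_distrib, sum_sub_distrib, ← mul_sum, hdiag, hpairs, sum_const,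
    nsmul_eq_mul]
  ring

lemma sum_zeroSphere_norm_ftSet_sq_eq (hq : Fintype.card F % 4 = 3) (hψ : ψ ≠ 1)
    (hd : d % 4 = 2) (A : Finset (Fin d → F)) :
    ∑ m ∈ univ.filter (fun m : Fin d → F => ∑ i, m i ^ 2 = 0), ‖ftSet ψ A m‖ ^ 2
      = (Fintype.card F : ℝ) ^ (-(d : ℝ) - 1) * #A
        + (Fintype.card F : ℝ) ^ ((-3 * (d : ℝ) - 2) / 2) * (#A : ℝ) ^ 2
        - (Fintype.card F : ℝ) ^ (-3 * (d : ℝ) / 2)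
          * #{p ∈ A ×ˢ A | ∑ i, (p.2 i - p.1 i) ^ 2 = 0} := by
  have hF := ringChar_ne_two_of_card_mod_four_eq_three hq
  obtain ⟨k, hk, hdk⟩ : ∃ k, Odd k ∧ d = 2 * k := ⟨d / 2, Nat.odd_iff.mpr (by omega), by omega⟩
  subst hdk
  have hη : (quadraticChar F (-1) : ℂ) = -1 := by
    rw [quadraticChar_neg_one hF, ZMod.χ₄_nat_three_mod_four hq, Int.cast_neg, Int.cast_one]
  have hcomplex := ofReal_sum_zeroSphere_norm_ftSet_sq hF hψ (even_two_mul k) A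
  rw [hη, neg_one_mul, Nat.mul_div_cancel_left k two_pos, hk.neg_pow] at hcomplex
  have hexp (e : ℝ) (n : ℕ) (he : e = -(n : ℝ)) :
      (Fintype.card F : ℝ) ^ e = ((Fintype.card F : ℝ) ^ n)⁻¹ := by
    rw [he, Real.rpow_neg (Nat.cast_nonneg _), Real.rpow_natCast]
  have hq0 : (Fintype.card F : ℂ) ≠ 0 := Nat.cast_ne_zero.mpr Fintype.card_ne_zero
  rw [hexp _ (2 * k + 1) (by push_cast; ring), hexp _ (3 * k + 1) (by push_cast; ring),
    hexp _ (3 * k) (by push_cast; ring)]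
  apply Complex.ofReal_injective
  rw [hcomplex]
  push_cast
  field_simp
  ring

end Identity

theorem stmt_13_general {F : Type} [Field F] [Fintype F] [DecidableEq F]
    (χ : AddChar F ℂ) (hχ : χ ≠ 1)
    (d : ℕ) (hd : d % 4 = 2) (hq : Fintype.card F % 4 = 3)
    (A : Finset (Fin d → F)) :
    ∑ m ∈ univ.filter (fun m : Fin d → F => ∑ i, m i ^ 2 = 0),
        ‖ftSet χ A m‖ ^ 2
      ≤ (Fintype.card F : ℝ) ^ (-(d : ℝ) - 1) * A.card
        + (Fintype.card F : ℝ) ^ ((-3 * (d : ℝ) - 2) / 2) * (A.card : ℝ) ^ 2 := by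
  rw [sum_zeroSphere_norm_ftSet_sq_eq hq hχ hd A]
  have hpairs : 0 ≤ (Fintype.card F : ℝ) ^ (-3 * (d : ℝ) / 2)
      * #{p ∈ A ×ˢ A | ∑ i, (p.2 i - p.1 i) ^ 2 = 0} := by positivity
  linarith

/-- Zero-radius sphere restriction: if `d ≡ 2 (mod 4)` and `q ≡ 3 (mod 4)`, then
`∑_{m ∈ S_0} |Â(m)|² ≤ q^{-d-1}|A| + q^{(-3d-2)/2}|A|²`. -/
theorem stmt_13 {F : Type} [Field F] [Fintype F] [DecidableEq F]
    (hodd : Odd (Fintype.card F)) (χ : AddChar F ℂ) (hχ : χ ≠ 1)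
    (d : ℕ) (hd : d % 4 = 2) (hq : Fintype.card F % 4 = 3)
    (A : Finset (Fin d → F)) :
    ∑ m ∈ univ.filter (fun m : Fin d → F => ∑ i, m i ^ 2 = 0),
        ‖ftSet χ A m‖ ^ 2
      ≤ (Fintype.card F : ℝ) ^ (-(d : ℝ) - 1) * A.card
        + (Fintype.card F : ℝ) ^ ((-3 * (d : ℝ) - 2) / 2) * (A.card : ℝ) ^ 2 :=
  stmt_13_general χ hχ d hd hq A
end
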